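/- Let φ be a norm on ℝ^{n+1}, r̄ > 0, W = {x : φ°(x) ≤ 1}, and let P ⊆ ℝ^{n+1} be a nonempty bounded open set. Suppose that |E^φ_{≥r̄}(P) + sW| = (|P|/r̄^{n+1})·s^{n+1} for every 0 < s < r̄, and that |E^φ_{≥r̄}(P) + int(r̄W)| = |P|, where + is the Minkowski sum, int denotes the interior, and |·| is (n+1)-dimensional Lebesgue measure. Then C := E^φ_{≥r̄}(P) is a finite set with card(C)·r̄^{n+1}·|W| = |P|; the open sets c + int(r̄W), for c ∈ C, are pairwise disjoint and contained in P; and |P \ ⋃_{c∈C}(c + int(r̄W))| = 0. -/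

import Mathlib

open MeasureTheory Filter
open scoped RealInnerProductSpace ENNReal Pointwise Topology NNReal

noncomputable section

/-- `ℝ^{n+1}` with the Euclidean inner product. -/
abbrev Eu (n : ℕ) := EuclideanSpace ℝ (Fin (n + 1))

/-- `φ` is a norm on `ℝ^{n+1}`: positive away from `0`, absolutely homogeneous,
and subadditive. -/
def IsNorm {n : ℕ} (φ : Eu n → ℝ) : Prop :=
  (∀ v : Eu n, v ≠ 0 → 0 < φ v) ∧
  (∀ (c : ℝ) (v : Eu n), φ (c • v) = |c| * φ v) ∧
  (∀ v w : Eu n, φ (v + w) ≤ φ v + φ w)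

/-- `φ` is strictly convex: equality in the triangle inequality forces linear dependence. -/
def StrictlyConvexNorm {n : ℕ} (φ : Eu n → ℝ) : Prop :=
  ∀ v w : Eu n, φ (v + w) = φ v + φ w → φ v • w = φ w • v

/-- The dual (polar) norm `φ°(u) = sup {⟨u,v⟩ : φ(v) ≤ 1}`. -/
def dualN {n : ℕ} (φ : Eu n → ℝ) (u : Eu n) : ℝ :=
  sSup {r : ℝ | ∃ v : Eu n, φ v ≤ 1 ∧ r = ⟪u, v⟫}

/-- The `φ`-distance `δ_A^φ(x) = inf {φ°(x − a) : a ∈ A}`. -/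
def adist {n : ℕ} (φ : Eu n → ℝ) (A : Set (Eu n)) (x : Eu n) : ℝ :=
  sInf ((fun a => dualN φ (x - a)) '' A)

/-- The `φ`-unit normal bundle `N^φ(A)`. -/
def normalBundle {n : ℕ} (φ : Eu n → ℝ) (A : Set (Eu n)) : Set (Eu n × Eu n) :=
  {p | p.1 ∈ closure A ∧ dualN φ p.2 = 1 ∧ ∃ s : ℝ, 0 < s ∧ adist φ A (p.1 + s • p.2) = s}

/-- The `φ`-reach function `r_A^φ(a,η) = sup {s > 0 : δ_A^φ(a + sη) = s}`, valued in `[0,∞]`. -/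
def reach {n : ℕ} (φ : Eu n → ℝ) (A : Set (Eu n)) (a η : Eu n) : ℝ≥0∞ :=
  sSup {s : ℝ≥0∞ | ∃ t : ℝ, 0 < t ∧ adist φ A (a + t • η) = t ∧ s = ENNReal.ofReal t}

/-- The `φ`-cut locus of `A`. -/
def cutLocus {n : ℕ} (φ : Eu n → ℝ) (A : Set (Eu n)) : Set (Eu n) :=
  {x | ∃ a η : Eu n, (a, η) ∈ normalBundle φ A ∧ reach φ A a η < ⊤ ∧
      x = a + (reach φ A a η).toReal • η}

/-- The domain `Γ^φ(A)` of the `φ`-distance flow. -/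
def Gamma {n : ℕ} (φ : Eu n → ℝ) (A : Set (Eu n)) : Set (Eu n × Eu n × ℝ) :=
  {q | (q.1, q.2.1) ∈ normalBundle φ A ∧ 0 < q.2.2 ∧
      ENNReal.ofReal q.2.2 < reach φ A q.1 q.2.1}

/-!
Write `C = E^φ_{≥r̄}(P)` and `W` for the unit ball of `φ°`. Finitely many points of `C` are at
positive mutual `φ°`-distance, so for small `s` their Wulff balls `c + sW` are disjoint subsets of
`C + sW`; the first volume identity then bounds their number by `|P| / (r̄^{n+1}|W|)`, so `C` is
finite with `#C · r̄^{n+1}|W| ≤ |P|`. Since `δ(c) ≥ r̄`, each open ball `c + int(r̄W)` lies in `P`,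
and by the second identity their union has measure `|P| ≤ #C · r̄^{n+1}|W|`, the sum of their
measures. So all these inequalities are equalities: the union fills `P` up to a null set, and open
sets whose measures add up to the measure of their union are pairwise disjoint.
-/

open Set

theorem Set.finite_of_forall_finset_card_mul_le {α : Type*} {C : Set α} {m M : ℝ≥0∞}
    (hm : m ≠ 0) (hM : M ≠ ⊤) (h : ∀ F : Finset α, ↑F ⊆ C → F.card * m ≤ M) : C.Finite := by
  by_contra hinf
  obtain ⟨N, hN⟩ := ENNReal.exists_nat_gt (ENNReal.div_lt_top hM hm).ne
  obtain ⟨F, hFC, hcard⟩ := Set.Infinite.exists_subset_card_eq hinf N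
  exact (ENNReal.le_div_iff_mul_le (Or.inl hm) (Or.inr hM) |>.2 (hcard ▸ h F hFC)).not_gt hN

namespace MeasureTheory

variable {α ι : Type*} [MeasurableSpace α] {μ : Measure α}

theorem measure_inter_eq_zero_of_measure_biUnion_eq_sum {s : Finset ι} {A : ι → Set α}
    (hfin : μ (⋃ k ∈ s, A k) ≠ ⊤) (h : μ (⋃ k ∈ s, A k) = ∑ k ∈ s, μ (A k))
    {i j : ι} (hi : i ∈ s) (hj : j ∈ s) (hij : i ≠ j) (hAi : NullMeasurableSet (A i) μ) :
    μ (A i ∩ A j) = 0 := by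
  classical
  set T := ⋃ k ∈ s.erase i, A k
  have hunion : ⋃ k ∈ s, A k = A i ∪ T := by
    conv_lhs => rw [← Finset.insert_erase hi]
    rw [Finset.set_biUnion_insert]
  have hle : μ (A i ∪ T) + μ (A i ∩ T) ≤ μ (A i ∪ T) + 0 := by
    calc μ (A i ∪ T) + μ (A i ∩ T) = μ (A i) + μ T := measure_union_add_inter₀' hAi T
      _ ≤ μ (A i) + ∑ k ∈ s.erase i, μ (A k) := by gcongr; exact measure_biUnion_finset_le _ _
      _ = μ (A i ∪ T) + 0 := by
          rw [Finset.add_sum_erase s (fun k => μ (A k)) hi, ← h, hunion, add_zero]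
  have hT : μ (A i ∩ T) = 0 :=
    nonpos_iff_eq_zero.1 (ENNReal.le_of_add_le_add_left (hunion ▸ hfin) hle)
  exact measure_mono_null
    (inter_subset_inter_right _ (subset_biUnion_of_mem (Finset.mem_erase.2 ⟨hij.symm, hj⟩))) hT

theorem pairwiseDisjoint_of_measure_biUnion_eq_sum [TopologicalSpace α] [OpensMeasurableSpace α]
    [μ.IsOpenPosMeasure] {s : Finset ι} {A : ι → Set α} (hA : ∀ i, IsOpen (A i))
    (hfin : μ (⋃ k ∈ s, A k) ≠ ⊤) (h : μ (⋃ k ∈ s, A k) = ∑ k ∈ s, μ (A k)) :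
    (s : Set ι).PairwiseDisjoint A := fun i hi j hj hij =>
  disjoint_iff_inter_eq_empty.2 <| ((hA i).inter (hA j)).measure_eq_zero_iff μ |>.1 <|
    measure_inter_eq_zero_of_measure_biUnion_eq_sum hfin h hi hj hij
      (hA i).measurableSet.nullMeasurableSet

end MeasureTheory

namespace Seminorm

theorem interior_closedBall_zero_subset_ball {E : Type*} [AddCommGroup E] [Module ℝ E]
    [TopologicalSpace E] [ContinuousSMul ℝ E] (p : Seminorm ℝ E) {r : ℝ} (hr : 0 < r) :
    interior (p.closedBall 0 r) ⊆ p.ball 0 r := by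
  intro x hx
  rw [p.mem_ball_zero]
  by_contra! hrx
  have hlim : Tendsto (fun t : ℝ => t • x) (𝓝[>] 1) (𝓝 x) := by
    have hcont : Continuous fun t : ℝ => t • x := by fun_prop
    exact (hcont.tendsto' 1 x (one_smul ℝ x)).mono_left nhdsWithin_le_nhds
  obtain ⟨t, hin, ht⟩ :=
    ((hlim.eventually (isOpen_interior.mem_nhds hx)).and self_mem_nhdsWithin).exists
  have hle := p.mem_closedBall_zero.1 (interior_subset hin)
  have ht1 : 1 < t := ht
  rw [map_smul_eq_mul, Real.norm_of_nonneg (by linarith)] at hle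
  nlinarith

variable {E : Type*} [NormedAddCommGroup E] [NormedSpace ℝ E]

theorem smul_closedBall_zero_one (p : Seminorm ℝ E) {r : ℝ} (hr : 0 < r) :
    r • p.closedBall 0 1 = p.closedBall 0 r := by
  rw [smul_closedBall_zero (by simpa using hr.ne'), Real.norm_of_nonneg hr.le, mul_one]

theorem eventually_two_mul_lt_sub (p : Seminorm ℝ E) (hp : ∀ x ≠ 0, 0 < p x) (F : Finset E) :
    ∀ᶠ s in 𝓝[>] (0 : ℝ), ∀ c ∈ F, ∀ d ∈ F, c ≠ d → 2 * s < p (c - d) := by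
  simp only [Filter.eventually_all_finset, eventually_imp_distrib_left]
  intro c _ d _ hcd
  have hlim : Tendsto (fun s : ℝ => 2 * s) (𝓝[>] 0) (𝓝 0) := by
    have hcont : Continuous fun s : ℝ => 2 * s := by fun_prop
    simpa using (hcont.tendsto 0).mono_left nhdsWithin_le_nhds
  exact hlim.eventually (gt_mem_nhds (hp _ (sub_ne_zero.2 hcd)))

theorem disjoint_vadd_closedBall_zero (p : Seminorm ℝ E) {c d : E} {s : ℝ}
    (h : 2 * s < p (c - d)) : Disjoint (c +ᵥ p.closedBall 0 s) (d +ᵥ p.closedBall 0 s) := by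
  simp only [vadd_closedBall, vadd_eq_add, add_zero, Set.disjoint_left]
  intro x hxc hxd
  have htri := map_sub_le_add p (x - d) (x - c)
  rw [sub_sub_sub_cancel_left] at htri
  linarith [p.mem_closedBall.1 hxc, p.mem_closedBall.1 hxd]

variable [FiniteDimensional ℝ E]

theorem continuous_of_finiteDimensional (p : Seminorm ℝ E) : Continuous p :=
  continuousOn_univ.1 (p.convexOn.continuousOn isOpen_univ)

theorem exists_pos_mul_norm_le (p : Seminorm ℝ E) (hp : ∀ x ≠ 0, 0 < p x) :
    ∃ c > 0, ∀ x, c * ‖x‖ ≤ p x := by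
  rcases subsingleton_or_nontrivial E with hE | hE
  · exact ⟨1, one_pos, fun x => by simp [Subsingleton.elim x 0]⟩
  obtain ⟨x₀, hx₀, hmin⟩ := (isCompact_sphere (0 : E) 1).exists_isMinOn
    (NormedSpace.sphere_nonempty.2 zero_le_one) p.continuous_of_finiteDimensional.continuousOn
  refine ⟨p x₀, hp x₀ (ne_zero_of_mem_unit_sphere ⟨x₀, hx₀⟩), fun x => ?_⟩
  rcases eq_or_ne x 0 with rfl | hx
  · simp
  have hunit : ‖x‖⁻¹ • x ∈ Metric.sphere (0 : E) 1 := by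
    simp [norm_smul, hx]
  have hle : p x₀ ≤ ‖x‖⁻¹ * p x := by
    simpa [map_smul_eq_mul] using hmin hunit
  rwa [le_inv_mul_iff₀ (norm_pos_iff.2 hx), mul_comm] at hle

theorem isBounded_closedBall_of_pos (p : Seminorm ℝ E) (hp : ∀ x ≠ 0, 0 < p x) (x : E) (r : ℝ) :
    Bornology.IsBounded (p.closedBall x r) := by
  obtain ⟨c, hc, hle⟩ := p.exists_pos_mul_norm_le hp
  refine (Metric.isBounded_closedBall (x := x) (r := r / c)).subset fun y hy => ?_
  rw [Metric.mem_closedBall, dist_eq_norm, le_div_iff₀' hc]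
  exact (hle _).trans (p.mem_closedBall.1 hy)

variable [MeasurableSpace E] (μ : Measure E) [μ.IsAddHaarMeasure]

theorem measure_closedBall_zero_one_pos (p : Seminorm ℝ E) : 0 < μ (p.closedBall 0 1) :=
  μ.measure_pos_of_mem_nhds (Filter.mem_of_superset
    (ball_mem_nhds p.continuous_of_finiteDimensional one_pos) (p.ball_subset_closedBall 0 1))

variable [BorelSpace E]

theorem measure_interior_smul_closedBall (p : Seminorm ℝ E) {r : ℝ} (hr : 0 ≤ r) :
    μ (interior (r • p.closedBall 0 1)) =
      ENNReal.ofReal (r ^ Module.finrank ℝ E) * μ (p.closedBall 0 1) := by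
  rw [measure_interior_of_null_frontier (((p.convex_closedBall 0 1).smul r).addHaar_frontier μ),
    Measure.addHaar_smul_of_nonneg μ hr]

theorem card_mul_measure_closedBall_le (p : Seminorm ℝ E) (hp : ∀ x ≠ 0, 0 < p x)
    {C : Set E} {r : ℝ} (hr : 0 < r) {M : ℝ≥0∞}
    (hC : ∀ s, 0 < s → s < r →
      μ (C + s • p.closedBall 0 1) ≤ ENNReal.ofReal (s ^ Module.finrank ℝ E) * M)
    {F : Finset E} (hF : ↑F ⊆ C) : F.card * μ (p.closedBall 0 1) ≤ M := by
  obtain ⟨s, hsep, hs0, hsr⟩ :=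
    ((p.eventually_two_mul_lt_sub hp F).and (Ioo_mem_nhdsGT hr)).exists
  have hball := p.smul_closedBall_zero_one hs0
  have hdisj : (F : Set E).PairwiseDisjoint fun c => c +ᵥ p.closedBall 0 s :=
    fun c hc d hd hcd => p.disjoint_vadd_closedBall_zero (hsep c hc d hd hcd)
  have hmeas (c : E) : MeasurableSet (c +ᵥ p.closedBall 0 s) :=
    (p.closedBall_zero_eq ▸
      (isClosed_le p.continuous_of_finiteDimensional continuous_const).measurableSet).const_vadd c
  have hpow : ENNReal.ofReal (s ^ Module.finrank ℝ E) ≠ 0 :=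
    (ENNReal.ofReal_pos.2 (pow_pos hs0 _)).ne'
  refine (ENNReal.mul_le_mul_iff_right hpow ENNReal.ofReal_ne_top).1 ?_
  calc ENNReal.ofReal (s ^ Module.finrank ℝ E) * (F.card * μ (p.closedBall 0 1))
      = ∑ c ∈ F, μ (c +ᵥ p.closedBall 0 s) := by
        simp only [measure_vadd, ← hball, Measure.addHaar_smul_of_nonneg μ hs0.le,
          Finset.sum_const, nsmul_eq_mul]
        ring
    _ = μ (⋃ c ∈ F, c +ᵥ p.closedBall 0 s) :=
        (measure_biUnion_finset hdisj fun c _ => hmeas c).symm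
    _ ≤ μ (C + s • p.closedBall 0 1) :=
        measure_mono (iUnion₂_subset fun c hc => hball ▸ vadd_set_subset_add (hF hc))
    _ ≤ _ := hC s hs0 hsr

end Seminorm

namespace IsNorm

variable {n : ℕ} {φ : Eu n → ℝ}

def toSeminorm (hφ : IsNorm φ) : Seminorm ℝ (Eu n) :=
  Seminorm.of φ hφ.2.2 fun a v => by rw [hφ.2.1, Real.norm_eq_abs]

theorem bddAbove_inner (hφ : IsNorm φ) (u : Eu n) :
    BddAbove {r : ℝ | ∃ v : Eu n, φ v ≤ 1 ∧ r = ⟪u, v⟫} := by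
  obtain ⟨c, hc, hle⟩ := hφ.toSeminorm.exists_pos_mul_norm_le hφ.1
  refine ⟨‖u‖ * (1 / c), ?_⟩
  rintro _ ⟨v, hv, rfl⟩
  have hv' : ‖v‖ ≤ 1 / c := (le_div_iff₀' hc).2 ((hle v).trans hv)
  exact (real_inner_le_norm u v).trans (by gcongr)

theorem inner_le_dualN (hφ : IsNorm φ) {v : Eu n} (hv : φ v ≤ 1) (u : Eu n) :
    ⟪u, v⟫ ≤ dualN φ u :=
  le_csSup (hφ.bddAbove_inner u) ⟨v, hv, rfl⟩

theorem abs_inner_le_dualN (hφ : IsNorm φ) {v : Eu n} (hv : φ v ≤ 1) (u : Eu n) :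
    |⟪u, v⟫| ≤ dualN φ u := by
  refine abs_le'.2 ⟨hφ.inner_le_dualN hv u, ?_⟩
  rw [← inner_neg_right]
  exact hφ.inner_le_dualN ((map_neg_eq_map hφ.toSeminorm v).trans_le hv) u

theorem dualN_le_of_forall (hφ : IsNorm φ) {u : Eu n} {r : ℝ}
    (h : ∀ v : Eu n, φ v ≤ 1 → ⟪u, v⟫ ≤ r) : dualN φ u ≤ r :=
  csSup_le ⟨0, 0, (map_zero hφ.toSeminorm).trans_le zero_le_one, by simp⟩
    fun _ ⟨v, hv, hr⟩ => hr ▸ h v hv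

def dualSeminorm (hφ : IsNorm φ) : Seminorm ℝ (Eu n) :=
  Seminorm.ofSMulLE (dualN φ)
    (le_antisymm (hφ.dualN_le_of_forall fun _ _ => by simp)
      (hφ.inner_le_dualN ((map_zero hφ.toSeminorm).trans_le zero_le_one) 0 |>.trans_eq' (by simp)))
    (fun u w => hφ.dualN_le_of_forall fun v hv => by
      rw [inner_add_left]; exact add_le_add (hφ.inner_le_dualN hv u) (hφ.inner_le_dualN hv w))
    (fun a u => hφ.dualN_le_of_forall fun v hv => by
      rw [real_inner_smul_left, Real.norm_eq_abs]
      exact (le_abs_self _).trans ((abs_mul _ _).trans_le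
        (mul_le_mul_of_nonneg_left (hφ.abs_inner_le_dualN hv u) (abs_nonneg a))))

@[simp]
theorem dualSeminorm_apply (hφ : IsNorm φ) (u : Eu n) : hφ.dualSeminorm u = dualN φ u := rfl

theorem dualSeminorm_pos (hφ : IsNorm φ) {u : Eu n} (hu : u ≠ 0) : 0 < hφ.dualSeminorm u := by
  have hφu := hφ.1 u hu
  have hv : φ ((φ u)⁻¹ • u) ≤ 1 := by
    rw [hφ.2.1, abs_of_pos (inv_pos.2 hφu), inv_mul_cancel₀ hφu.ne']
  calc 0 < (φ u)⁻¹ * ‖u‖ ^ 2 := by have := norm_pos_iff.2 hu; positivity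
    _ = ⟪u, (φ u)⁻¹ • u⟫ := by rw [real_inner_smul_right, real_inner_self_eq_norm_sq]
    _ ≤ hφ.dualSeminorm u := hφ.inner_le_dualN hv u

theorem setOf_dualN_le_eq_closedBall (hφ : IsNorm φ) (r : ℝ) :
    {x : Eu n | dualN φ x ≤ r} = hφ.dualSeminorm.closedBall 0 r :=
  hφ.dualSeminorm.closedBall_zero_eq.symm

theorem adist_le_dualN (hφ : IsNorm φ) {A : Set (Eu n)} {a : Eu n} (ha : a ∈ A) (x : Eu n) :
    adist φ A x ≤ dualN φ (x - a) :=
  csInf_le ⟨0, fun _ ⟨b, _, hb⟩ => hb ▸ apply_nonneg hφ.dualSeminorm (x - b)⟩ ⟨a, ha, rfl⟩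

theorem vadd_ball_subset_of_le_adist_compl (hφ : IsNorm φ) {P : Set (Eu n)} {r : ℝ} {c : Eu n}
    (hc : r ≤ adist φ Pᶜ c) : c +ᵥ hφ.dualSeminorm.ball 0 r ⊆ P := by
  rintro _ ⟨y, hy, rfl⟩
  by_contra hout
  have hdist := hφ.adist_le_dualN (show c + y ∈ Pᶜ from hout) c
  rw [sub_add_cancel_left, ← hφ.dualSeminorm_apply, map_neg_eq_map] at hdist
  linarith [hφ.dualSeminorm.mem_ball_zero.1 hy]

theorem vadd_interior_smul_closedBall_subset (hφ : IsNorm φ) {P : Set (Eu n)} {r : ℝ}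
    (hr : 0 < r) {c : Eu n} (hc : r ≤ adist φ Pᶜ c) :
    c +ᵥ interior (r • hφ.dualSeminorm.closedBall 0 1) ⊆ P := by
  rw [hφ.dualSeminorm.smul_closedBall_zero_one hr]
  exact (vadd_set_mono (hφ.dualSeminorm.interior_closedBall_zero_subset_ball hr)).trans
    (hφ.vadd_ball_subset_of_le_adist_compl hc)

theorem card_mul_volume_le (hφ : IsNorm φ) {P : Set (Eu n)} (hPbd : Bornology.IsBounded P)
    {r : ℝ} (hr : 0 < r)
    (hvol : ∀ s : ℝ, 0 < s → s < r →
      (volume ({x : Eu n | r ≤ adist φ Pᶜ x} + s • hφ.dualSeminorm.closedBall 0 1)).toReal =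
        (volume P).toReal / r ^ (n + 1) * s ^ (n + 1))
    {F : Finset (Eu n)} (hF : ↑F ⊆ {x : Eu n | r ≤ adist φ Pᶜ x}) :
    F.card * (ENNReal.ofReal (r ^ (n + 1)) * volume (hφ.dualSeminorm.closedBall 0 1)) ≤
      volume P := by
  set p := hφ.dualSeminorm
  have hCP : {x : Eu n | r ≤ adist φ Pᶜ x} ⊆ P := fun c hc => by
    simpa using hφ.vadd_ball_subset_of_le_adist_compl hc (vadd_mem_vadd_set (p.mem_ball_self hr))
  have hcount : F.card * volume (p.closedBall 0 1) ≤
      ENNReal.ofReal ((volume P).toReal / r ^ (n + 1)) := by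
    refine p.card_mul_measure_closedBall_le volume (fun _ => hφ.dualSeminorm_pos) hr
      (fun s hs hsr => ?_) hF
    have hbd : Bornology.IsBounded ({x : Eu n | r ≤ adist φ Pᶜ x} + s • p.closedBall 0 1) :=
      (hPbd.add ((p.isBounded_closedBall_of_pos (fun _ => hφ.dualSeminorm_pos) 0 1).smul₀ s)).subset
        (add_subset_add_right hCP)
    rw [← ENNReal.ofReal_toReal hbd.measure_lt_top.ne, hvol s hs hsr, finrank_euclideanSpace_fin,
      mul_comm, ENNReal.ofReal_mul (by positivity)]
  calc F.card * (ENNReal.ofReal (r ^ (n + 1)) * volume (p.closedBall 0 1))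
      = ENNReal.ofReal (r ^ (n + 1)) * (F.card * volume (p.closedBall 0 1)) := by ring
    _ ≤ ENNReal.ofReal (r ^ (n + 1)) * ENNReal.ofReal ((volume P).toReal / r ^ (n + 1)) := by
        gcongr
    _ = volume P := by
        rw [← ENNReal.ofReal_mul (by positivity), mul_div_cancel₀ _ (by positivity),
          ENNReal.ofReal_toReal hPbd.measure_lt_top.ne]

end IsNorm

theorem wulff_rigidity_general {n : ℕ} (φ : Eu n → ℝ) (hφ : IsNorm φ)
    (rbar : ℝ) (hrbar : 0 < rbar)
    (P : Set (Eu n)) (hPbd : Bornology.IsBounded P)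
    (hvol1 : ∀ s : ℝ, 0 < s → s < rbar →
      (volume ({x : Eu n | rbar ≤ adist φ Pᶜ x} + s • {x : Eu n | dualN φ x ≤ 1})).toReal =
        (volume P).toReal / rbar ^ (n + 1) * s ^ (n + 1))
    (hvol2 : (volume ({x : Eu n | rbar ≤ adist φ Pᶜ x} +
        interior (rbar • {x : Eu n | dualN φ x ≤ 1}))).toReal = (volume P).toReal) :
    {x : Eu n | rbar ≤ adist φ Pᶜ x}.Finite ∧
      (({x : Eu n | rbar ≤ adist φ Pᶜ x}.ncard : ℝ) * rbar ^ (n + 1) *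
        (volume {x : Eu n | dualN φ x ≤ 1}).toReal = (volume P).toReal) ∧
      (∀ c ∈ {x : Eu n | rbar ≤ adist φ Pᶜ x},
        (fun y => c + y) '' interior (rbar • {x : Eu n | dualN φ x ≤ 1}) ⊆ P) ∧
      ({x : Eu n | rbar ≤ adist φ Pᶜ x}.Pairwise fun c d =>
        Disjoint ((fun y => c + y) '' interior (rbar • {x : Eu n | dualN φ x ≤ 1}))
          ((fun y => d + y) '' interior (rbar • {x : Eu n | dualN φ x ≤ 1}))) ∧
      volume (P \ ⋃ c ∈ {x : Eu n | rbar ≤ adist φ Pᶜ x},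
        (fun y => c + y) '' interior (rbar • {x : Eu n | dualN φ x ≤ 1})) = 0 := by
  simp only [hφ.setOf_dualN_le_eq_closedBall] at hvol1 hvol2 ⊢
  set p := hφ.dualSeminorm
  set C := {x : Eu n | rbar ≤ adist φ Pᶜ x}
  have hPfin : volume P ≠ ⊤ := hPbd.measure_lt_top.ne
  have hBP (c : Eu n) (hc : c ∈ C) := hφ.vadd_interior_smul_closedBall_subset hrbar hc
  have hfin : C.Finite := Set.finite_of_forall_finset_card_mul_le
    (mul_ne_zero (ENNReal.ofReal_pos.2 (by positivity)).ne'
      (p.measure_closedBall_zero_one_pos volume).ne') hPfin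
    fun F hF => hφ.card_mul_volume_le hPbd hrbar hvol1 hF
  set F := hfin.toFinset
  have hFC : (F : Set (Eu n)) = C := hfin.coe_toFinset
  set B : Eu n → Set (Eu n) := fun c => c +ᵥ interior (rbar • p.closedBall 0 1)
  have hsum : ∑ c ∈ F, volume (B c) =
      F.card * (ENNReal.ofReal (rbar ^ (n + 1)) * volume (p.closedBall 0 1)) := by
    simp only [B, measure_vadd, p.measure_interior_smul_closedBall volume hrbar.le,
      finrank_euclideanSpace_fin, Finset.sum_const, nsmul_eq_mul]
  have hUP : ⋃ c ∈ F, B c ⊆ P := iUnion₂_subset fun c hc => hBP c (hFC ▸ hc)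
  have hUfin : volume (⋃ c ∈ F, B c) ≠ ⊤ := measure_ne_top_of_subset hUP hPfin
  have hge : volume P ≤ volume (⋃ c ∈ F, B c) := by
    have hUC : ⋃ c ∈ F, B c = C + interior (rbar • p.closedBall 0 1) :=
      hFC ▸ iUnion_add_left_image
    rw [← ENNReal.ofReal_toReal hPfin, ← hvol2, ← hUC, ENNReal.ofReal_toReal hUfin]
  have hsum_eq : ∑ c ∈ F, volume (B c) = volume P :=
    le_antisymm (hsum ▸ hφ.card_mul_volume_le hPbd hrbar hvol1 hFC.subset)
      (hge.trans (measure_biUnion_finset_le _ _))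
  refine ⟨hfin, ?_, hBP, ?_, ?_⟩
  · rw [Set.ncard_eq_toFinset_card C hfin, ← hsum_eq, hsum, ENNReal.toReal_mul,
      ENNReal.toReal_mul, ENNReal.toReal_natCast, ENNReal.toReal_ofReal (by positivity), mul_assoc]
  · rw [← hFC]
    exact pairwiseDisjoint_of_measure_biUnion_eq_sum (fun c => isOpen_interior.vadd c) hUfin
      (le_antisymm (measure_biUnion_finset_le _ _) (hsum_eq ▸ hge))
  · rw [← hFC]
    exact (ae_eq_set.1 (ae_eq_of_subset_of_measure_ge hUP hge
      (isOpen_biUnion fun c _ => isOpen_interior.vadd c).measurableSet.nullMeasurableSet hPfin)).2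

/-- rigidity. If `|E^φ_{≥r̄}(P) + sW| = (|P|/r̄^{n+1})·s^{n+1}` for `0 < s < r̄`
and `|E^φ_{≥r̄}(P) + int(r̄W)| = |P|`, then `C = E^φ_{≥r̄}(P)` is finite with
`card(C)·r̄^{n+1}·|W| = |P|`, the translated open Wulff shapes `c + int(r̄W)`, `c ∈ C`,
are pairwise disjoint and contained in `P`, and they fill `P` up to measure zero. -/
theorem wulff_rigidity {n : ℕ} (φ : Eu n → ℝ) (hφ : IsNorm φ)
    (rbar : ℝ) (hrbar : 0 < rbar)
    (P : Set (Eu n)) (hPne : P.Nonempty) (hPbd : Bornology.IsBounded P) (hPopen : IsOpen P)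
    (hvol1 : ∀ s : ℝ, 0 < s → s < rbar →
      (volume ({x : Eu n | rbar ≤ adist φ Pᶜ x} + s • {x : Eu n | dualN φ x ≤ 1})).toReal =
        (volume P).toReal / rbar ^ (n + 1) * s ^ (n + 1))
    (hvol2 : (volume ({x : Eu n | rbar ≤ adist φ Pᶜ x} +
        interior (rbar • {x : Eu n | dualN φ x ≤ 1}))).toReal = (volume P).toReal) :
    {x : Eu n | rbar ≤ adist φ Pᶜ x}.Finite ∧
      (({x : Eu n | rbar ≤ adist φ Pᶜ x}.ncard : ℝ) * rbar ^ (n + 1) *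
        (volume {x : Eu n | dualN φ x ≤ 1}).toReal = (volume P).toReal) ∧
      (∀ c ∈ {x : Eu n | rbar ≤ adist φ Pᶜ x},
        (fun y => c + y) '' interior (rbar • {x : Eu n | dualN φ x ≤ 1}) ⊆ P) ∧
      ({x : Eu n | rbar ≤ adist φ Pᶜ x}.Pairwise fun c d =>
        Disjoint ((fun y => c + y) '' interior (rbar • {x : Eu n | dualN φ x ≤ 1}))
          ((fun y => d + y) '' interior (rbar • {x : Eu n | dualN φ x ≤ 1}))) ∧
      volume (P \ ⋃ c ∈ {x : Eu n | rbar ≤ adist φ Pᶜ x},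
        (fun y => c + y) '' interior (rbar • {x : Eu n | dualN φ x ≤ 1})) = 0 :=
  wulff_rigidity_general φ hφ rbar hrbar P hPbd hvol1 hvol2
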